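/- (Hoffman; harmonic product relation for 𝒜-finite multiple zeta values.) For all words w = z_{k_1}⋯z_{k_r} and w' = z_{k'_1}⋯z_{k'_s} in 𝔥¹ (and hence, by bilinearity, for all w, w' ∈ 𝔥¹), one has Z_𝒜(w * w') = Z_𝒜(w)·Z_𝒜(w'). -/

import Mathlib

noncomputable section

namespace FMZVNote

/-- The noncommutative polynomial ring `𝔥 = ℚ⟨x,y⟩` in two indeterminates `x`, `y`. -/
abbrev H : Type := FreeAlgebra ℚ (Fin 2)

/-- The generator `x`. -/
def x : H := FreeAlgebra.ι ℚ 0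

/-- The generator `y`. -/
def y : H := FreeAlgebra.ι ℚ 1

/-- `z = x + y`. -/
def z : H := x + y

/-- `z_k = x^{k-1} y`. -/
def zk (k : ℕ) : H := x ^ (k - 1) * y

/-- The word `z_{k_1} ⋯ z_{k_r}` associated to an index `(k_1, …, k_r)`. -/
def zword (ks : List ℕ) : H := (ks.map zk).prod

/-- The ideal `⊕_p ℤ/pℤ` of finitely supported elements of `∏_p ℤ/pℤ`. -/
def finSupportIdeal : Ideal (∀ p : Nat.Primes, ZMod p) where
  carrier := {f | {p : Nat.Primes | f p ≠ 0}.Finite}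
  zero_mem' := by simp
  add_mem' := by
    intro a b ha hb
    refine (ha.union hb).subset ?_
    intro p hp
    simp only [Set.mem_setOf_eq, Set.mem_union]
    by_contra h
    push_neg at h
    exact hp (by simp [h.1, h.2])
  smul_mem' := by
    intro c f hf
    refine hf.subset ?_
    intro p hp
    simp only [Set.mem_setOf_eq] at hp ⊢
    intro h
    exact hp (by simp [h])

/-- The ring `𝒜 = (∏_p ℤ/pℤ)/(⊕_p ℤ/pℤ)`, where `p` runs over all primes. -/
abbrev Acal : Type := (∀ p : Nat.Primes, ZMod p) ⧸ finSupportIdeal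

theorem Acal.isUnit_intCast (n : ℤ) (hn : n ≠ 0) : IsUnit ((n : ℤ) : Acal) := by
  refine IsUnit.of_mul_eq_one
    (Ideal.Quotient.mk finSupportIdeal fun p => ((n : ZMod p))⁻¹) ?_
  have h1 : ((n : ℤ) : Acal)
      = Ideal.Quotient.mk finSupportIdeal (fun p => ((n : ZMod p))) := by
    rw [← map_intCast (Ideal.Quotient.mk finSupportIdeal) n]
    rfl
  rw [h1, ← map_mul, ← map_one (Ideal.Quotient.mk finSupportIdeal), Ideal.Quotient.eq]
  have hfin : {p : Nat.Primes | ((n : ZMod (p : ℕ))) = 0}.Finite := by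
    have hsub : {p : Nat.Primes | ((n : ZMod (p : ℕ))) = 0} ⊆
        (fun p : Nat.Primes => (p : ℕ)) ⁻¹' (Set.Iic n.natAbs) := by
      intro p hp
      simp only [Set.mem_setOf_eq] at hp
      haveI : NeZero (p : ℕ) := ⟨p.2.ne_zero⟩
      rw [ZMod.intCast_zmod_eq_zero_iff_dvd] at hp
      have hd : (p : ℕ) ∣ n.natAbs := by
        have := Int.natAbs_dvd_natAbs.mpr hp
        simpa using this
      exact Nat.le_of_dvd (Int.natAbs_pos.mpr hn) hd
    exact ((Set.finite_Iic _).preimage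
      (fun a _ b _ h => Subtype.ext h)).subset hsub
  refine hfin.subset ?_
  intro p hp
  simp only [Set.mem_setOf_eq] at hp ⊢
  by_contra h
  apply hp
  haveI : Fact (p : ℕ).Prime := ⟨p.2⟩
  simp [mul_inv_cancel₀ h]

/-- Every nonzero integer is invertible in `𝒜`, so `𝒜` is a `ℚ`-algebra. -/
instance : Algebra ℚ Acal :=
  (IsLocalization.lift (M := nonZeroDivisors ℤ) (S := ℚ)
    (g := Int.castRingHom Acal)
    (fun v => Acal.isUnit_intCast v.1 (nonZeroDivisors.ne_zero v.2))).toAlgebra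

instance : Module ℚ Acal := Algebra.toModule

/-- The finite multiple zeta value `ζ_𝒜(k_1,…,k_r)`, the class in `𝒜` of the tuple
`(Σ_{p>n_1>⋯>n_r≥1} 1/(n_1^{k_1}⋯n_r^{k_r}) mod p)_p`. -/
def zetaA (k : List ℕ) : Acal :=
  Ideal.Quotient.mk finSupportIdeal fun p =>
    ∑ n : Fin k.length → Fin p,
      if (∀ i, 0 < (n i : ℕ)) ∧
          (∀ i j : Fin k.length, i < j → (n j : ℕ) < (n i : ℕ)) then
        ∏ i, ((((n i : ℕ) : ZMod p)) ^ k.get i)⁻¹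
      else 0

/-- The harmonic product `z_{k_1}⋯z_{k_r} * z_{l_1}⋯z_{l_s}` of two words, determined by
`1*w = w*1 = w` and
`z_k w₁ * z_l w₂ = z_k (w₁ * z_l w₂) + z_l (z_k w₁ * w₂) + z_{k+l} (w₁ * w₂)`. -/
def hprod : List ℕ → List ℕ → H
  | [], w => zword w
  | k :: w1, [] => zword (k :: w1)
  | k :: w1, l :: w2 =>
      zk k * hprod w1 (l :: w2) + zk l * hprod (k :: w1) w2
        + zk (k + l) * hprod w1 w2
  termination_by w1 w2 => w1.length + w2.length

/-!
At each prime `p`, `ζ_𝒜(k₁,…,kᵣ)` is represented by the truncated nested sum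
`S_N(k₁,…,kᵣ) = ∑_{N > n₁ > ⋯ > nᵣ} n₁^{-k₁} ⋯ nᵣ^{-kᵣ}` with `N = p`. For every `N` these sums
multiply like the harmonic product, `S_N(u) S_N(v) = ∑_{w ∈ u * v} S_N(w)`: raising `N` to `N + 1`
adds `N^{-k} S_N(u)` to `S_N(k u)`, and expanding the product of two such increments reproduces
the three branches of the recursion for `*`, the last one through `N^{-k} N^{-l} = N^{-(k+l)}`.
Reducing modulo the finitely supported tuples gives the relation for `ζ_𝒜`, and `Z` transports it
by linearity.
-/
def stuffle : List ℕ → List ℕ → List (List ℕ)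
  | [], w => [w]
  | k :: u, [] => [k :: u]
  | k :: u, l :: v =>
      (stuffle u (l :: v)).map (k :: ·) ++ (stuffle (k :: u) v).map (l :: ·)
        ++ (stuffle u v).map ((k + l) :: ·)
  termination_by u v => u.length + v.length

lemma zword_cons (k : ℕ) (w : List ℕ) : zword (k :: w) = zk k * zword w := by
  simp [zword]

lemma hprod_eq_sum_zword_stuffle (u v : List ℕ) :
    hprod u v = ((stuffle u v).map zword).sum := by
  induction u, v using stuffle.induct with
  | case1 w => simp [hprod, stuffle]
  | case2 k u => simp [hprod, stuffle]
  | case3 k u l v ih₁ ih₂ ih₃ =>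
    rw [hprod, stuffle, ih₁, ih₂, ih₃]
    simp only [List.map_append, List.map_map, List.sum_append, Function.comp_def,
      zword_cons, List.sum_map_mul_left]

lemma one_le_of_mem_stuffle {u v : List ℕ} (hu : ∀ k ∈ u, 1 ≤ k) (hv : ∀ k ∈ v, 1 ≤ k) :
    ∀ w ∈ stuffle u v, ∀ k ∈ w, 1 ≤ k := by
  induction u, v using stuffle.induct with
  | case1 w => simpa [stuffle] using hv
  | case2 k u => simpa [stuffle] using hu
  | case3 k u l v ih₁ ih₂ ih₃ =>
    simp only [List.forall_mem_cons] at hu hv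
    rw [stuffle]
    simp only [List.mem_append, List.mem_map]
    rintro _ ((⟨w, hw, rfl⟩ | ⟨w, hw, rfl⟩) | ⟨w, hw, rfl⟩) <;> simp only [List.forall_mem_cons]
    · exact ⟨hu.1, ih₁ hu.2 (List.forall_mem_cons.2 hv) w hw⟩
    · exact ⟨hv.1, ih₂ (List.forall_mem_cons.2 hu) hv.2 w hw⟩
    · exact ⟨le_add_right hu.1, ih₃ hu.2 hv.2 w hw⟩

lemma strictAnti_cons_iff {α : Type*} [Preorder α] {r : ℕ} (x : α) (t : Fin r → α) :
    StrictAnti (Fin.cons x t : Fin (r + 1) → α) ↔ StrictAnti t ∧ ∀ i, t i < x := by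
  refine ⟨fun h => ⟨fun i j hij => ?_, fun i => ?_⟩, fun ⟨ht, htx⟩ i j hij => ?_⟩
  · simpa using h (Fin.succ_lt_succ_iff.2 hij)
  · simpa using h (Fin.succ_pos i)
  induction j using Fin.cases with
  | zero => exact absurd hij (Fin.not_lt_zero i)
  | succ j =>
    induction i using Fin.cases with
    | zero => simpa using htx j
    | succ i => simpa using ht (Fin.succ_lt_succ_iff.1 hij)

section HarmonicSum

variable {R : Type*} [CommSemiring R] (a : ℕ → R)

def harmonicSum : List ℕ → ℕ → R
  | [], _ => 1
  | k :: w, N => ∑ n ∈ Finset.range N, a n ^ k * harmonicSum w n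

@[simp] lemma harmonicSum_nil (N : ℕ) : harmonicSum a [] N = 1 := rfl

@[simp] lemma harmonicSum_cons_zero (k : ℕ) (w : List ℕ) : harmonicSum a (k :: w) 0 = 0 :=
  Finset.sum_range_zero _

lemma harmonicSum_cons_succ (k : ℕ) (w : List ℕ) (N : ℕ) :
    harmonicSum a (k :: w) (N + 1) = harmonicSum a (k :: w) N + a N ^ k * harmonicSum a w N :=
  Finset.sum_range_succ _ _

lemma sum_map_harmonicSum_cons_succ (k : ℕ) (W : List (List ℕ)) (N : ℕ) :
    (W.map fun w => harmonicSum a (k :: w) (N + 1)).sum =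
      (W.map fun w => harmonicSum a (k :: w) N).sum +
        a N ^ k * (W.map fun w => harmonicSum a w N).sum := by
  simp only [harmonicSum_cons_succ, List.sum_map_add, List.sum_map_mul_left]

theorem harmonicSum_mul_harmonicSum (u v : List ℕ) (N : ℕ) :
    harmonicSum a u N * harmonicSum a v N =
      ((stuffle u v).map fun w => harmonicSum a w N).sum := by
  induction N generalizing u v with
  | zero =>
    match u, v with
    | [], v => simp [stuffle]
    | k :: u, [] => simp [stuffle]
    | k :: u, l :: v => simp [stuffle, Function.comp_def]
  | succ N ih =>
    match u, v with
    | [], v => simp [stuffle]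
    | k :: u, [] => simp [stuffle]
    | k :: u, l :: v =>
      have hN := ih (k :: u) (l :: v)
      rw [stuffle] at hN ⊢
      simp only [List.map_append, List.sum_append, List.map_map, Function.comp_def] at hN ⊢
      rw [sum_map_harmonicSum_cons_succ, sum_map_harmonicSum_cons_succ,
        sum_map_harmonicSum_cons_succ, harmonicSum_cons_succ, harmonicSum_cons_succ,
        ← ih u (l :: v), ← ih (k :: u) v, ← ih u v, pow_add, add_mul, mul_add, mul_add, hN]
      ring

theorem harmonicSum_eq_sum_strictAnti (ks : List ℕ) {N M : ℕ} (hNM : N ≤ M) :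
    harmonicSum a ks N = ∑ n : Fin ks.length → Fin M,
      if StrictAnti (fun i => (n i : ℕ)) ∧ ∀ i, (n i : ℕ) < N then
        ∏ i, a (n i) ^ ks.get i else 0 := by
  induction ks generalizing N with
  | nil => simp [Subsingleton.strictAnti]
  | cons k w ih =>
    have hlhs : harmonicSum a (k :: w) N =
        ∑ n₀ : Fin M, if (n₀ : ℕ) < N then a n₀ ^ k * harmonicSum a w n₀ else 0 := by
      rw [Fin.sum_univ_eq_sum_range (fun n => if n < N then a n ^ k * harmonicSum a w n else 0),
        Finset.sum_ite, Finset.sum_const_zero, add_zero, harmonicSum]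
      congr 1
      ext n
      simp only [Finset.mem_filter, Finset.mem_range]
      omega
    simp only [List.length_cons]
    rw [hlhs, ← (Fin.consEquiv fun _ => Fin M).sum_comp, Fintype.sum_prod_type]
    refine Finset.sum_congr rfl fun n₀ _ => ?_
    have hval (t : Fin w.length → Fin M) :
        (fun i => ((Fin.cons n₀ t : Fin (w.length + 1) → Fin M) i : ℕ)) =
          Fin.cons (n₀ : ℕ) fun i => (t i : ℕ) := by
      simpa only [Function.comp_def] using Fin.comp_cons Fin.val n₀ t
    have hcond (t : Fin w.length → Fin M) :
        ((StrictAnti fun i => ((Fin.cons n₀ t : Fin (w.length + 1) → Fin M) i : ℕ)) ∧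
            ∀ i, ((Fin.cons n₀ t : Fin (w.length + 1) → Fin M) i : ℕ) < N) ↔
          (n₀ : ℕ) < N ∧ (StrictAnti fun i => (t i : ℕ)) ∧ ∀ i, (t i : ℕ) < n₀ := by
      rw [hval, strictAnti_cons_iff, Fin.forall_fin_succ]
      simp only [Fin.cons_zero, Fin.cons_succ]
      exact ⟨fun h => ⟨h.2.1, h.1⟩, fun h => ⟨h.2, h.1, fun i => (h.2.2 i).trans h.1⟩⟩
    simp only [Fin.consEquiv_apply, hcond, Fin.prod_univ_succ, Fin.cons_zero, Fin.cons_succ,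
      List.get_cons_zero]
    split_ifs with hn₀
    · simp only [hn₀, true_and, ih n₀.is_lt.le, Finset.mul_sum, mul_ite, mul_zero]
      rfl
    · simp only [hn₀, false_and, if_false, Finset.sum_const_zero]

end HarmonicSum

-- The index `n = 0` of `harmonicSum` is harmless here: `(0 : ZMod p)⁻¹ = 0` and all `kᵢ ≥ 1`.
def harmonicSumAtPrimes (ks : List ℕ) : ∀ p : Nat.Primes, ZMod p :=
  fun p => harmonicSum (fun n => (n : ZMod p)⁻¹) ks p

lemma harmonicSumAtPrimes_mul (ks ls : List ℕ) :
    harmonicSumAtPrimes ks * harmonicSumAtPrimes ls =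
      ((stuffle ks ls).map harmonicSumAtPrimes).sum := by
  funext p
  rw [Pi.mul_apply, Pi.list_sum_apply, List.map_map]
  exact harmonicSum_mul_harmonicSum _ ks ls p

lemma zetaA_eq_mk_harmonicSumAtPrimes {ks : List ℕ} (hks : ∀ k ∈ ks, 1 ≤ k) :
    zetaA ks = Ideal.Quotient.mk finSupportIdeal (harmonicSumAtPrimes ks) := by
  unfold zetaA
  congr 1
  funext p
  have : Fact (p : ℕ).Prime := ⟨p.2⟩
  rw [harmonicSumAtPrimes, harmonicSum_eq_sum_strictAnti _ ks le_rfl]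
  refine Finset.sum_congr rfl fun n _ => ?_
  simp only [Fin.is_lt, implies_true, and_true]
  by_cases hpos : ∀ i, 0 < (n i : ℕ)
  · simp only [hpos, implies_true, true_and]
    exact if_congr Iff.rfl (Finset.prod_congr rfl fun i _ => (inv_pow _ _).symm) rfl
  · obtain ⟨i, hi⟩ : ∃ i, (n i : ℕ) = 0 := by simpa using hpos
    have hzero : ∏ i, ((n i : ℕ) : ZMod p)⁻¹ ^ ks.get i = 0 :=
      Finset.prod_eq_zero (Finset.mem_univ i) (by
        rw [hi, Nat.cast_zero, inv_zero,
          zero_pow (Nat.one_le_iff_ne_zero.1 (hks _ (List.get_mem ks i)))])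
    simp only [hpos, false_and, if_false, hzero, ite_self]

theorem zetaA_mul_zetaA {ks ls : List ℕ} (hks : ∀ k ∈ ks, 1 ≤ k) (hls : ∀ k ∈ ls, 1 ≤ k) :
    zetaA ks * zetaA ls = ((stuffle ks ls).map zetaA).sum := by
  rw [zetaA_eq_mk_harmonicSumAtPrimes hks, zetaA_eq_mk_harmonicSumAtPrimes hls, ← map_mul,
    harmonicSumAtPrimes_mul, map_list_sum, List.map_map]
  exact congrArg List.sum <| List.map_congr_left fun w hw =>
    (zetaA_eq_mk_harmonicSumAtPrimes (one_le_of_mem_stuffle hks hls w hw)).symm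

theorem harmonic_product_relation_fmzv_A_general
    (Z : H →ₗ[ℚ] Acal)
    (hZ : ∀ ks : List ℕ, (∀ k ∈ ks, 1 ≤ k) → Z (zword ks) = zetaA ks)
    (ks ls : List ℕ) (hks : ∀ k ∈ ks, 1 ≤ k) (hls : ∀ k ∈ ls, 1 ≤ k) :
    Z (hprod ks ls) = Z (zword ks) * Z (zword ls) := by
  rw [hprod_eq_sum_zword_stuffle, map_list_sum, List.map_map, hZ ks hks, hZ ls hls,
    zetaA_mul_zetaA hks hls]
  exact congrArg List.sum <| List.map_congr_left fun w hw =>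
    hZ w (one_le_of_mem_stuffle hks hls w hw)

/-- **Harmonic product relation for `𝒜`-finite multiple zeta values** (Hoffman).
For all words `w = z_{k_1}⋯z_{k_r}`, `w' = z_{k'_1}⋯z_{k'_s}` in `𝔥¹`:
`Z_𝒜(w * w') = Z_𝒜(w)·Z_𝒜(w')`. -/
theorem harmonic_product_relation_fmzv_A
    (Z : H →ₗ[ℚ] Acal) (hZone : Z 1 = 1)
    (hZ : ∀ ks : List ℕ, (∀ k ∈ ks, 1 ≤ k) → Z (zword ks) = zetaA ks)
    (ks ls : List ℕ) (hks : ∀ k ∈ ks, 1 ≤ k) (hls : ∀ k ∈ ls, 1 ≤ k) :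
    Z (hprod ks ls) = Z (zword ks) * Z (zword ls) :=
  harmonic_product_relation_fmzv_A_general Z hZ ks ls hks hls

end FMZVNote
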